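/- Let λ₀ > 0, l₀ ≥ 1, β₁ ≥ 0, and ν a measure on ℝ with ∫_{−∞}^1 (e^z − 1)² ν(dz) < ∞. Define ψ(u) = 2 − e^{−λ₀ u} and E(λ₀, l₀) = β₁² + ∫_{−∞}^0 (e^z − 1)² ν(dz) + e^{−λ₀(e−1) l₀} ∫₀^1 (e^z − 1)² ν(dz). Then for all 0 < u ≤ l₀: (1/2)β₁² u² ψ''(u) + ∫_{−∞}^1 [ψ(e^z u) − ψ(u) − (e^z − 1) u ψ'(u)] ν(dz) ≤ (1/2) ψ''(u) u² E(λ₀, l₀); in particular, for each z ≤ 1 and 0 < u ≤ l₀, ψ(e^z u) − ψ(u) − (e^z − 1) u ψ'(u) ≤ (1/2) ψ''(u) u² (e^z − 1)² · (1 if z ≤ 0, e^{−λ₀(e−1)l₀} if 0 < z ≤ 1). -/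
import Mathlib


open MeasureTheory

lemma quad_le_exp' (r : ℝ) (hr : 0 ≤ r) : 1 + r + r^2/2 ≤ Real.exp r := by
  have := Real.sum_le_exp_of_nonneg hr 3
  simp [Finset.sum_range_succ] at this
  nlinarith [this]

lemma expC' (r : ℝ) (hr : 0 ≤ r) : Real.exp (-r) ≤ 1 - r + r^2/2 := by
  have h1 := quad_le_exp' r hr
  have h2 : Real.exp (-r) * Real.exp r = 1 := by rw [← Real.exp_add]; simp
  have h4 := Real.exp_pos (-r)
  nlinarith [sq_nonneg r, sq_nonneg (r^2), mul_le_mul_of_nonneg_left h1 h4.le]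

lemma lemB' (s : ℝ) (hs : 0 ≤ s) : s^2/2 ≤ Real.exp s * (s - 1) + 1 := by
  rcases le_or_gt 1 s with h | h
  · have h1 := quad_le_exp' s hs
    nlinarith [h1]
  · have hb := Real.exp_bound (x := s) (by rw [abs_of_nonneg hs]; exact h.le) (by norm_num : 0 < 3)
    rw [abs_of_nonneg hs] at hb
    simp [Finset.sum_range_succ, Nat.factorial] at hb
    rw [abs_le] at hb
    nlinarith [hb.1, hb.2, sq_nonneg s, mul_nonneg (mul_nonneg hs hs) hs,
      mul_nonneg (mul_nonneg (mul_nonneg hs hs) hs) hs]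

lemma absbound' (A s : ℝ) (hA : 0 ≤ A) (hs : -A ≤ s) :
    |Real.exp (-s) - 1 + s| ≤ Real.exp A * s^2 := by
  have hA1 : (1:ℝ) ≤ Real.exp A := Real.one_le_exp hA
  rcases le_or_gt 0 s with h | h
  · have hlb : 1 - s ≤ Real.exp (-s) := by linarith [Real.add_one_le_exp (-s)]
    have hub := expC' s h
    rw [abs_of_nonneg (by linarith)]
    nlinarith [sq_nonneg s]
  · set r := -s with hr
    have hr0 : 0 < r := by simp [hr]; linarith
    have hrA : r ≤ A := by simp [hr]; linarith
    have hlb : 1 + r ≤ Real.exp r := by linarith [Real.add_one_le_exp r]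
    have heq : Real.exp (-s) - 1 + s = Real.exp r - 1 - r := by simp [hr]
    rw [heq, abs_of_nonneg (by linarith)]
    have hs2 : s^2 = r^2 := by simp [hr]
    rw [hs2]
    rcases le_or_gt r 1 with h1 | h1
    · have := Real.abs_exp_sub_one_sub_id_le (x := r) (by rw [abs_of_nonneg hr0.le]; exact h1)
      rw [abs_le] at this
      nlinarith [sq_nonneg r]
    · have h2 : Real.exp r ≤ Real.exp A := Real.exp_le_exp.2 hrA
      have hr2 : (1:ℝ) ≤ r^2 := by nlinarith
      nlinarith [mul_le_mul_of_nonneg_left hr2 (Real.exp_pos A).le]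


/-- Second-order estimate for `ψ(u) = 2 − e^{−lam0u}` along multiplicative
perturbations: for `z ≤ 1` and `0 < u ≤ l₀`,
`ψ(e^z u) − ψ(u) − (e^z−1)uψ'(u) ≤ (1/2)ψ''(u)u²(e^z−1)²·(1 or e^{−lam0(e−1)l₀})`,
and the integrated bound against the environment fluctuation term
`E(lam0,l₀)`. -/
theorem environment_second_order_estimate
    (lam0 l₀ β₁ : ℝ) (hlam0 : 0 < lam0) (hl₀ : 1 ≤ l₀) (hβ₁ : 0 ≤ β₁)
    (ν : Measure ℝ)
    (hν : IntegrableOn (fun z => (Real.exp z - 1) ^ 2) (Set.Iic (1 : ℝ)) ν)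
    (ψ : ℝ → ℝ) (hψ : ∀ u, ψ u = 2 - Real.exp (-(lam0 * u)))
    (E : ℝ)
    (hE : E = β₁ ^ 2 + (∫ z in Set.Iic (0:ℝ), (Real.exp z - 1) ^ 2 ∂ν)
        + Real.exp (-(lam0 * (Real.exp 1 - 1) * l₀))
          * ∫ z in Set.Ioc (0:ℝ) 1, (Real.exp z - 1) ^ 2 ∂ν) :
    (∀ z ≤ (1:ℝ), ∀ u : ℝ, 0 < u → u ≤ l₀ →
      ψ (Real.exp z * u) - ψ u - (Real.exp z - 1) * u * (lam0 * Real.exp (-(lam0 * u)))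
        ≤ (1/2) * (-(lam0 ^ 2 * Real.exp (-(lam0 * u)))) * u ^ 2 * (Real.exp z - 1) ^ 2
            * (if z ≤ 0 then 1 else Real.exp (-(lam0 * (Real.exp 1 - 1) * l₀)))) ∧
    (∀ u : ℝ, 0 < u → u ≤ l₀ →
      (1/2) * β₁ ^ 2 * u ^ 2 * (-(lam0 ^ 2 * Real.exp (-(lam0 * u))))
        + (∫ z in Set.Iic (1:ℝ),
            (ψ (Real.exp z * u) - ψ u
              - (Real.exp z - 1) * u * (lam0 * Real.exp (-(lam0 * u)))) ∂ν)
        ≤ (1/2) * (-(lam0 ^ 2 * Real.exp (-(lam0 * u)))) * u ^ 2 * E) := by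
  have he1 : (1:ℝ) ≤ Real.exp 1 := Real.one_le_exp (by norm_num)
  have hM : 0 ≤ lam0 * (Real.exp 1 - 1) * l₀ :=
    mul_nonneg (mul_nonneg hlam0.le (by linarith)) (by linarith)
  -- the pointwise bound
  have part1 : ∀ z ≤ (1:ℝ), ∀ u : ℝ, 0 < u → u ≤ l₀ →
      ψ (Real.exp z * u) - ψ u - (Real.exp z - 1) * u * (lam0 * Real.exp (-(lam0 * u)))
        ≤ (1/2) * (-(lam0 ^ 2 * Real.exp (-(lam0 * u)))) * u ^ 2 * (Real.exp z - 1) ^ 2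
            * (if z ≤ 0 then 1 else Real.exp (-(lam0 * (Real.exp 1 - 1) * l₀))) := by
    intro z hz u hu hul
    set a := lam0 * u with ha
    set t := Real.exp z - 1 with ht
    set s := a * t with hs
    have ha0 : 0 < a := mul_pos hlam0 hu
    have key : Real.exp (-(lam0 * (Real.exp z * u))) = Real.exp (-a) * Real.exp (-s) := by
      rw [← Real.exp_add]; congr 1; simp [ha, hs, ht]; ring
    rw [hψ, hψ, key]
    have hea : 0 < Real.exp (-a) := Real.exp_pos _
    by_cases hz0 : z ≤ 0
    · have hs0 : s ≤ 0 := by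
        have : t ≤ 0 := by simp [ht]; linarith [Real.exp_le_one_iff.2 hz0]
        exact mul_nonpos_of_nonneg_of_nonpos ha0.le this
      have hcore : 1 - Real.exp (-s) - s ≤ -(s^2/2) := by
        have := quad_le_exp' (-s) (by linarith)
        nlinarith [this]
      rw [if_pos hz0]
      have := mul_le_mul_of_nonneg_left hcore hea.le
      calc 2 - Real.exp (-a) * Real.exp (-s) - (2 - Real.exp (-a)) - t * u * (lam0 * Real.exp (-a))
          = Real.exp (-a) * (1 - Real.exp (-s) - s) := by simp only [hs, ha]; ring
        _ ≤ Real.exp (-a) * (-(s^2/2)) := this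
        _ = 1/2 * (-(lam0 ^ 2 * Real.exp (-a))) * u ^ 2 * t ^ 2 * 1 := by
            simp only [hs, ha]; ring
    · push_neg at hz0
      have hz1 : (1:ℝ) < Real.exp z := by
        calc (1:ℝ) = Real.exp 0 := by simp
          _ < Real.exp z := Real.exp_lt_exp.2 hz0
      have ht0 : 0 < t := by simp only [ht]; linarith
      have hs0 : 0 < s := mul_pos ha0 ht0
      have htE : t ≤ Real.exp 1 - 1 := by
        have : Real.exp z ≤ Real.exp 1 := Real.exp_le_exp.2 hz
        simp only [ht]; linarith
      have hsM : s ≤ lam0 * (Real.exp 1 - 1) * l₀ := by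
        have h1 : s ≤ a * (Real.exp 1 - 1) := mul_le_mul_of_nonneg_left htE ha0.le
        have h2 : a * (Real.exp 1 - 1) ≤ lam0 * l₀ * (Real.exp 1 - 1) := by
          apply mul_le_mul_of_nonneg_right _ (by linarith)
          exact mul_le_mul_of_nonneg_left hul hlam0.le
        calc s ≤ a * (Real.exp 1 - 1) := h1
          _ ≤ lam0 * l₀ * (Real.exp 1 - 1) := h2
          _ = lam0 * (Real.exp 1 - 1) * l₀ := by ring
      have hes : Real.exp (-(lam0 * (Real.exp 1 - 1) * l₀)) ≤ Real.exp (-s) :=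
        Real.exp_le_exp.2 (by linarith)
      have hcore : 1 - Real.exp (-s) - s
          ≤ -(s^2/2) * Real.exp (-(lam0 * (Real.exp 1 - 1) * l₀)) := by
        have hB := lemB' s hs0.le
        have hmul : Real.exp (-s) * Real.exp s = 1 := by rw [← Real.exp_add]; simp
        have hesp := Real.exp_pos (-s)
        have h1 : 1 - Real.exp (-s) - s ≤ -(s^2/2) * Real.exp (-s) := by
          nlinarith [mul_le_mul_of_nonneg_left hB hesp.le]
        have h2 : -(s^2/2) * Real.exp (-s)
            ≤ -(s^2/2) * Real.exp (-(lam0 * (Real.exp 1 - 1) * l₀)) :=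
          mul_le_mul_of_nonpos_left hes (by nlinarith [sq_nonneg s])
        linarith
      rw [if_neg (not_le.2 hz0)]
      have := mul_le_mul_of_nonneg_left hcore hea.le
      calc 2 - Real.exp (-a) * Real.exp (-s) - (2 - Real.exp (-a)) - t * u * (lam0 * Real.exp (-a))
          = Real.exp (-a) * (1 - Real.exp (-s) - s) := by simp only [hs, ha]; ring
        _ ≤ Real.exp (-a) * (-(s^2/2) * Real.exp (-(lam0 * (Real.exp 1 - 1) * l₀))) := this
        _ = 1/2 * (-(lam0 ^ 2 * Real.exp (-a))) * u ^ 2 * t ^ 2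
              * Real.exp (-(lam0 * (Real.exp 1 - 1) * l₀)) := by
            simp only [hs, ha]; ring
  refine ⟨part1, ?_⟩
  intro u hu hul
  have ha0 : 0 < lam0 * u := mul_pos hlam0 hu
  set m := Real.exp (-(lam0 * (Real.exp 1 - 1) * l₀)) with hm
  have hm0 : 0 < m := Real.exp_pos _
  have hm1 : m ≤ 1 := by rw [hm]; exact Real.exp_le_one_iff.2 (by linarith)
  set K := (1/2) * (-(lam0 ^ 2 * Real.exp (-(lam0 * u)))) * u ^ 2 with hK
  set f : ℝ → ℝ := fun z => ψ (Real.exp z * u) - ψ u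
      - (Real.exp z - 1) * u * (lam0 * Real.exp (-(lam0 * u))) with hf
  set g : ℝ → ℝ := fun z => K * (Real.exp z - 1) ^ 2 * (if z ≤ 0 then 1 else m) with hg
  have hfg : ∀ z ∈ Set.Iic (1:ℝ), f z ≤ g z := fun z hz => part1 z hz u hu hul
  set C := Real.exp (-(lam0 * u)) * Real.exp (lam0 * l₀) * (lam0 * u) ^ 2 with hC
  have hC0 : 0 ≤ C := by positivity
  have hfb : ∀ z, |f z| ≤ C * (Real.exp z - 1) ^ 2 := by
    intro z
    set t := Real.exp z - 1 with ht
    set s := lam0 * u * t with hs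
    have key : Real.exp (-(lam0 * (Real.exp z * u)))
        = Real.exp (-(lam0 * u)) * Real.exp (-s) := by
      rw [← Real.exp_add]; congr 1; simp [hs, ht]; ring
    have hfz : f z = Real.exp (-(lam0 * u)) * (Real.exp (-s) - 1 + s) * (-1) := by
      simp only [hf, hψ, key, hs, ht]; ring
    have hsA : -(lam0 * l₀) ≤ s := by
      have ht1 : -1 < t := by simp only [ht]; linarith [Real.exp_pos z]
      have haA : lam0 * u ≤ lam0 * l₀ := mul_le_mul_of_nonneg_left hul hlam0.le
      nlinarith
    have := absbound' (lam0 * l₀) s (by positivity) hsA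
    rw [hfz, abs_mul, abs_mul, abs_of_pos (Real.exp_pos _)]
    simp only [abs_neg, abs_one, mul_one]
    calc Real.exp (-(lam0 * u)) * |Real.exp (-s) - 1 + s|
        ≤ Real.exp (-(lam0 * u)) * (Real.exp (lam0 * l₀) * s ^ 2) :=
          mul_le_mul_of_nonneg_left this (Real.exp_pos _).le
      _ = C * t ^ 2 := by simp only [hC, hs]; ring
  have hf_cont : Continuous f := by
    simp only [hf, hψ]
    fun_prop
  have hf_int : IntegrableOn f (Set.Iic (1:ℝ)) ν := by
    apply Integrable.mono (hν.const_mul C) (hf_cont.aestronglyMeasurable.restrict)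
    filter_upwards with z
    rw [Real.norm_eq_abs, Real.norm_eq_abs]
    calc |f z| ≤ C * (Real.exp z - 1) ^ 2 := hfb z
      _ ≤ |C * (Real.exp z - 1) ^ 2| := le_abs_self _
  have hg_meas : Measurable g := by
    apply Measurable.mul
    · fun_prop
    · exact Measurable.ite measurableSet_Iic measurable_const measurable_const
  have hg_int : IntegrableOn g (Set.Iic (1:ℝ)) ν := by
    apply Integrable.mono (hν.const_mul |K|) (hg_meas.aestronglyMeasurable.restrict)
    filter_upwards with z
    rw [Real.norm_eq_abs, Real.norm_eq_abs]
    have hcz : |(if z ≤ 0 then (1:ℝ) else m)| ≤ 1 := by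
      split <;> simp [abs_of_pos hm0, hm1]
    calc |g z| = |K| * (Real.exp z - 1) ^ 2 * |if z ≤ 0 then (1:ℝ) else m| := by
          rw [hg, abs_mul, abs_mul, abs_pow, sq_abs]
      _ ≤ |K| * (Real.exp z - 1) ^ 2 * 1 :=
          mul_le_mul_of_nonneg_left hcz (by positivity)
      _ = |K| * (Real.exp z - 1) ^ 2 := mul_one _
      _ ≤ abs (|K| * (Real.exp z - 1) ^ 2) := le_abs_self _
  have hmono : ∫ z in Set.Iic (1:ℝ), f z ∂ν ≤ ∫ z in Set.Iic (1:ℝ), g z ∂ν :=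
    setIntegral_mono_on hf_int hg_int measurableSet_Iic hfg
  have hsplit : Set.Iic (1:ℝ) = Set.Iic 0 ∪ Set.Ioc 0 1 :=
    (Set.Iic_union_Ioc_eq_Iic (by norm_num)).symm
  have hg0 : IntegrableOn g (Set.Iic (0:ℝ)) ν :=
    hg_int.mono_set (Set.Iic_subset_Iic.2 (by norm_num))
  have hg1 : IntegrableOn g (Set.Ioc (0:ℝ) 1) ν :=
    hg_int.mono_set (fun x hx => hx.2)
  have hdisj : Disjoint (Set.Iic (0:ℝ)) (Set.Ioc 0 1) := Set.Iic_disjoint_Ioc le_rfl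
  have hgval : ∫ z in Set.Iic (1:ℝ), g z ∂ν
      = K * (∫ z in Set.Iic (0:ℝ), (Real.exp z - 1) ^ 2 ∂ν)
        + K * m * (∫ z in Set.Ioc (0:ℝ) 1, (Real.exp z - 1) ^ 2 ∂ν) := by
    rw [hsplit, setIntegral_union hdisj measurableSet_Ioc hg0 hg1]
    congr 1
    · rw [show (∫ z in Set.Iic (0:ℝ), g z ∂ν)
          = ∫ z in Set.Iic (0:ℝ), K * (Real.exp z - 1) ^ 2 ∂ν from
        setIntegral_congr_fun measurableSet_Iic (fun z hz => by
          have h0 : z ≤ 0 := hz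
          simp [hg, h0])]
      rw [integral_const_mul]
    · rw [show (∫ z in Set.Ioc (0:ℝ) 1, g z ∂ν)
          = ∫ z in Set.Ioc (0:ℝ) 1, (K * m) * (Real.exp z - 1) ^ 2 ∂ν from
        setIntegral_congr_fun measurableSet_Ioc (fun z hz => by
          have h0 : ¬ z ≤ 0 := not_le.2 hz.1
          simp [hg, h0]; ring)]
      rw [integral_const_mul]
  rw [hE]
  have h1 : ∫ z in Set.Iic (1:ℝ), f z ∂ν
      ≤ K * (∫ z in Set.Iic (0:ℝ), (Real.exp z - 1) ^ 2 ∂ν)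
        + K * m * (∫ z in Set.Ioc (0:ℝ) 1, (Real.exp z - 1) ^ 2 ∂ν) := hgval ▸ hmono
  have h2 : K * (β₁ ^ 2 + (∫ z in Set.Iic (0:ℝ), (Real.exp z - 1) ^ 2 ∂ν)
        + m * ∫ z in Set.Ioc (0:ℝ) 1, (Real.exp z - 1) ^ 2 ∂ν)
      = (1/2) * β₁ ^ 2 * u ^ 2 * (-(lam0 ^ 2 * Real.exp (-(lam0 * u))))
        + (K * (∫ z in Set.Iic (0:ℝ), (Real.exp z - 1) ^ 2 ∂ν)
          + K * m * (∫ z in Set.Ioc (0:ℝ) 1, (Real.exp z - 1) ^ 2 ∂ν)) := by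
    rw [hK]; ring
  show (1/2) * β₁ ^ 2 * u ^ 2 * (-(lam0 ^ 2 * Real.exp (-(lam0 * u))))
        + (∫ z in Set.Iic (1:ℝ), f z ∂ν)
      ≤ K * (β₁ ^ 2 + (∫ z in Set.Iic (0:ℝ), (Real.exp z - 1) ^ 2 ∂ν)
        + m * ∫ z in Set.Ioc (0:ℝ) 1, (Real.exp z - 1) ^ 2 ∂ν)
  linarith [h1, h2]
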